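/- The map ψ from Dyck paths of size n to unit interval posets on n elements, defined via the area vector (a_1,...,a_n) by i ≺ j iff a_i + 2 ≤ a_j or (a_i + 1 = a_j and i < j), is a bijection onto isomorphism classes of unit interval posets on n elements. -/

import Mathlib

/-- A Dyck word: `true` is a north step, `false` an east step. Every prefix
has at least as many north steps as east steps, and the totals agree. -/
def IsDyckWord (w : List Bool) : Prop :=
  (∀ p : List Bool, p <+: w → p.count false ≤ p.count true) ∧
    w.count true = w.count false

/-- Area vector of a Dyck word: `a_i` is the height (number of full unit squares
between the path and the diagonal, with upper edge on `y = i`) at the `i`-th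
north step; `h` is the current height. -/
def areaList : List Bool → ℕ → List ℕ
  | [], _ => []
  | true :: w, h => h :: areaList w (h + 1)
  | false :: w, h => areaList w (h - 1)

/-- The relation on `Fin n` obtained from the area vector of the Dyck word `w`:
`i ≺ j ↔ a_i + 2 ≤ a_j ∨ (a_i + 1 = a_j ∧ i < j)`. -/
def relOfDyck (n : ℕ) (w : List Bool) : Fin n → Fin n → Prop :=
  fun i j => (areaList w 0).getD i 0 + 2 ≤ (areaList w 0).getD j 0 ∨
    ((areaList w 0).getD i 0 + 1 = (areaList w 0).getD j 0 ∧ i < j)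

/-- `r` is (the strict order of) a unit interval order on `Fin n`. -/
def IsUnitIntervalRel (n : ℕ) (r : Fin n → Fin n → Prop) : Prop :=
  ∃ x : Fin n → ℝ, StrictMono x ∧ ∀ i j, r i j ↔ x i + 1 < x j

/-- Isomorphism of relations on `Fin n` (relabeling by a permutation). -/
def IsoRel (n : ℕ) (r r' : Fin n → Fin n → Prop) : Prop :=
  ∃ σ : Equiv.Perm (Fin n), ∀ i j, r i j ↔ r' (σ i) (σ j)

/-!
Write `a` for the area vector of a Dyck path; Dyck paths of size `n` correspond exactly to the
sequences with `a₀ = 0` and `aᵢ₊₁ ≤ aᵢ + 1` (`IsAreaSeq`). The relation `ψ(a)` (`areaRel a`) is the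
unit interval order of the points `aᵢ + i / n`.

Injectivity: `aₘ` is the height of `m` in `ψ(a)`, so an isomorphism `ψ(a) ≅ ψ(b)` preserves areas
and down-degrees, and an area sequence is determined by the multisets of its areas and of its
down-degrees (remove the last maximal entry and induct).

Surjectivity: a unit interval order on sorted points is the staircase relation `i ≺ j ↔ i < dⱼ`
with `d` monotone and `dⱼ ≤ j`. By injectivity, `ψ` gives an injection from area sequences into such
`d`, and `a ↦ (j ↦ j - aⱼ)` shows that both sets have the same size, so it is onto.
-/

namespace DyckUnitInterval

open Finset

section AreaList

variable {h k : ℕ} {w : List Bool} {l : List ℕ}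

def IsBallot (h : ℕ) (w : List Bool) : Prop :=
  ∀ p : List Bool, p <+: w → p.count false ≤ p.count true + h

lemma isBallot_nil (h : ℕ) : IsBallot h [] := by
  intro p hp
  simp [List.prefix_nil.mp hp]

lemma isBallot_cons {b : Bool} : IsBallot h (b :: w) ↔
    ∀ p : List Bool, p <+: w → (b :: p).count false ≤ (b :: p).count true + h := by
  simp only [IsBallot, List.prefix_cons_iff, or_imp, forall_and, forall_eq, List.count_nil,
    Nat.zero_le, true_and, forall_exists_index, and_imp]
  exact ⟨fun H p hp => H _ p rfl hp, fun H _ p hq hp => hq ▸ H p hp⟩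

lemma isBallot_cons_true : IsBallot h (true :: w) ↔ IsBallot (h + 1) w := by
  refine isBallot_cons.trans (forall₂_congr fun p _ => ?_)
  simp only [List.count_cons_self, List.count_cons, beq_iff_eq, reduceCtorEq, if_false]
  omega

lemma isBallot_cons_false : IsBallot h (false :: w) ↔ 1 ≤ h ∧ IsBallot (h - 1) w := by
  rw [isBallot_cons]
  refine ⟨fun hb => ⟨by simpa using hb [] List.nil_prefix, fun p hp => ?_⟩, fun hb p hp => ?_⟩
  · have := hb p hp
    simp at this
    omega
  · have := hb.2 p hp
    simp
    omega

lemma isBallot_replicate_false_append :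
    IsBallot h (List.replicate k false ++ w) ↔ k ≤ h ∧ IsBallot (h - k) w := by
  induction k generalizing h with
  | zero => simp
  | succ k ih =>
    rw [List.replicate_succ, List.cons_append, isBallot_cons_false, ih, Nat.sub_sub,
      Nat.add_comm 1 k, ← and_assoc]
    exact and_congr_left fun _ => by omega

def IsAreaList : ℕ → List ℕ → Prop
  | _, [] => True
  | h, a :: l => a ≤ h ∧ IsAreaList (a + 1) l

lemma IsAreaList.mono : ∀ {l : List ℕ} {h h' : ℕ}, IsAreaList h l → h ≤ h' → IsAreaList h' l
  | [], _, _, _, _ => trivial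
  | _ :: _, _, _, ⟨ha, hl⟩, hh => ⟨ha.trans hh, hl⟩

lemma IsBallot.isAreaList_areaList : ∀ {w : List Bool} {h : ℕ},
    IsBallot h w → IsAreaList h (areaList w h)
  | [], _, _ => trivial
  | true :: _, _, hb => ⟨le_rfl, (isBallot_cons_true.1 hb).isAreaList_areaList⟩
  | false :: _, _, hb => by
    obtain ⟨-, hb⟩ := isBallot_cons_false.1 hb
    exact hb.isAreaList_areaList.mono (Nat.sub_le _ 1)

lemma areaList_length : ∀ (w : List Bool) (h : ℕ), (areaList w h).length = w.count true
  | [], _ => rfl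
  | true :: w, h => by simp [areaList, areaList_length w]
  | false :: w, h => by simp [areaList, areaList_length w]

lemma areaList_replicate_false_append (k h : ℕ) (w : List Bool) :
    areaList (List.replicate k false ++ w) h = areaList w (h - k) := by
  induction k generalizing h with
  | zero => rfl
  | succ k ih =>
    rw [List.replicate_succ, List.cons_append, areaList, ih, Nat.sub_sub, Nat.add_comm 1 k]

def wordOfArea : ℕ → List ℕ → List Bool
  | h, [] => List.replicate h false
  | h, a :: l => List.replicate (h - a) false ++ true :: wordOfArea (a + 1) l

lemma areaList_wordOfArea : ∀ {l : List ℕ} {h : ℕ}, IsAreaList h l →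
    areaList (wordOfArea h l) h = l
  | [], h, _ => by
    simpa [wordOfArea, areaList] using areaList_replicate_false_append h h []
  | a :: l, h, ⟨ha, hl⟩ => by
    rw [wordOfArea, areaList_replicate_false_append, Nat.sub_sub_self ha, areaList,
      areaList_wordOfArea hl]

lemma wordOfArea_eq_false_cons (h1 : 1 ≤ h) (hl : IsAreaList (h - 1) l) :
    wordOfArea h l = false :: wordOfArea (h - 1) l := by
  cases l with
  | nil => rw [wordOfArea, wordOfArea, ← List.replicate_succ, Nat.sub_add_cancel h1]
  | cons a l =>
    rw [wordOfArea, wordOfArea, show h - a = h - 1 - a + 1 by have := hl.1; omega,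
      List.replicate_succ, List.cons_append]

lemma wordOfArea_areaList : ∀ {w : List Bool} {h : ℕ}, IsBallot h w →
    w.count true + h = w.count false → wordOfArea h (areaList w h) = w
  | [], h, _, hbal => by
    obtain rfl : h = 0 := by simpa using hbal
    rfl
  | true :: w, h, hb, hbal => by
    rw [areaList, wordOfArea, Nat.sub_self, List.replicate_zero, List.nil_append,
      wordOfArea_areaList (isBallot_cons_true.1 hb) (by simp at hbal; omega)]
  | false :: w, h, hb, hbal => by
    obtain ⟨h1, hb⟩ := isBallot_cons_false.1 hb
    rw [areaList, wordOfArea_eq_false_cons h1 hb.isAreaList_areaList,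
      wordOfArea_areaList hb (by simp at hbal; omega)]

lemma count_true_wordOfArea : ∀ (h : ℕ) (l : List ℕ), (wordOfArea h l).count true = l.length
  | h, [] => by simp [wordOfArea, List.count_replicate]
  | h, a :: l => by simp [wordOfArea, List.count_replicate, count_true_wordOfArea (a + 1) l]

lemma count_false_wordOfArea : ∀ {l : List ℕ} {h : ℕ}, IsAreaList h l →
    (wordOfArea h l).count false = h + l.length
  | [], h, _ => by simp [wordOfArea]
  | a :: l, h, ⟨ha, hl⟩ => by
    simp [wordOfArea, count_false_wordOfArea hl]
    omega

lemma IsAreaList.isBallot_wordOfArea : ∀ {l : List ℕ} {h : ℕ}, IsAreaList h l →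
    IsBallot h (wordOfArea h l)
  | [], h, _ => by
    simpa [wordOfArea] using isBallot_replicate_false_append.2 ⟨le_rfl, isBallot_nil (h - h)⟩
  | a :: l, h, ⟨ha, hl⟩ => by
    rw [wordOfArea, isBallot_replicate_false_append, Nat.sub_sub_self ha, isBallot_cons_true]
    exact ⟨Nat.sub_le h a, hl.isBallot_wordOfArea⟩

end AreaList

section AreaSeq

variable {n : ℕ} {f : Fin n → ℕ}

structure IsAreaSeq (f : Fin n → ℕ) : Prop where
  zero : ∀ i : Fin n, (i : ℕ) = 0 → f i = 0
  step : ∀ i j : Fin n, (j : ℕ) = i + 1 → f j ≤ f i + 1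

lemma isAreaList_ofFn_iff : ∀ {n : ℕ} (f : Fin n → ℕ) (h : ℕ),
    IsAreaList h (List.ofFn f) ↔
      (∀ i : Fin n, (i : ℕ) = 0 → f i ≤ h) ∧ ∀ i j : Fin n, (j : ℕ) = i + 1 → f j ≤ f i + 1
  | 0, f, h => by simp [IsAreaList]
  | n + 1, f, h => by
    rw [List.ofFn_succ, IsAreaList, isAreaList_ofFn_iff]
    simp [Fin.forall_fin_succ]

lemma isAreaSeq_iff_isAreaList : IsAreaSeq f ↔ IsAreaList 0 (List.ofFn f) := by
  rw [isAreaList_ofFn_iff]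
  simp only [Nat.le_zero]
  exact ⟨fun hf => ⟨hf.zero, hf.step⟩, fun hf => ⟨hf.1, hf.2⟩⟩

lemma IsAreaSeq.exists_lt_eq (hf : IsAreaSeq f) {t : ℕ} {m : Fin n} (ht : t < f m) :
    ∃ k < m, f k = t := by
  obtain ⟨m, hm⟩ := m
  induction m with
  | zero => simp [hf.zero ⟨0, hm⟩ rfl] at ht
  | succ m ih =>
    have hstep := hf.step ⟨m, by omega⟩ ⟨m + 1, hm⟩ rfl
    have hlt : (⟨m, by omega⟩ : Fin n) < ⟨m + 1, hm⟩ := Fin.mk_lt_mk.2 m.lt_succ_self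
    by_cases htm : t < f ⟨m, by omega⟩
    · obtain ⟨k, hk, hkt⟩ := ih (by omega) htm
      exact ⟨k, hk.trans hlt, hkt⟩
    · exact ⟨⟨m, by omega⟩, hlt, by omega⟩

lemma IsAreaSeq.le_add_sub (hf : IsAreaSeq f) {i j : Fin n} (hij : i ≤ j) :
    f j ≤ f i + ((j : ℕ) - i) := by
  obtain ⟨k, hk⟩ := Nat.exists_eq_add_of_le (Fin.le_def.1 hij)
  rw [hk, Nat.add_sub_cancel_left]
  induction k generalizing j with
  | zero => rw [Fin.ext hk]; simp
  | succ k ih =>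
    have h1 := ih (j := ⟨i + k, by omega⟩) (Fin.le_def.2 (by simp)) rfl
    have h2 := hf.step ⟨i + k, by omega⟩ j (by simp [hk]; omega)
    omega

lemma IsAreaSeq.le_val (hf : IsAreaSeq f) (j : Fin n) : f j ≤ j := by
  simpa [hf.zero ⟨0, j.pos⟩ rfl] using hf.le_add_sub (i := ⟨0, j.pos⟩) (Fin.le_def.2 j.val.zero_le)

lemma IsAreaSeq.monotone_sub (hf : IsAreaSeq f) : Monotone fun j : Fin n => (j : ℕ) - f j :=
  fun i j hij => by
    show (i : ℕ) - f i ≤ j - f j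
    have := hf.le_add_sub hij
    have := hf.le_val i
    have : (i : ℕ) ≤ j := hij
    omega

lemma isAreaSeq_sub {d : Fin n → ℕ} (hd : Monotone d) (hdj : ∀ j, d j ≤ j) :
    IsAreaSeq fun j : Fin n => (j : ℕ) - d j where
  zero i hi := by have := hdj i; omega
  step i j hij := by
    have := hd (show i ≤ j from Fin.le_def.2 (by omega))
    have := hdj i
    omega

lemma ncard_isAreaSeq : {f : Fin n → ℕ | IsAreaSeq f}.ncard =
    {d : Fin n → ℕ | Monotone d ∧ ∀ j, d j ≤ j}.ncard := by
  refine Set.ncard_congr (fun f _ j => (j : ℕ) - f j)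
    (fun f hf => ⟨hf.monotone_sub, fun j => Nat.sub_le _ _⟩) (fun f g hf hg h => ?_) ?_
  · funext j
    rw [← Nat.sub_sub_self (hf.le_val j), ← Nat.sub_sub_self (hg.le_val j)]
    exact congrArg ((j : ℕ) - ·) (congrFun h j)
  · rintro d ⟨hd, hdj⟩
    exact ⟨_, isAreaSeq_sub hd hdj, funext fun j => Nat.sub_sub_self (hdj j)⟩

def areaFun (n : ℕ) (w : List Bool) : Fin n → ℕ := fun i => (areaList w 0).getD i 0

lemma ofFn_getD {l : List ℕ} (hl : l.length = n) :
    List.ofFn (fun i : Fin n => l.getD i 0) = l := by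
  subst hl
  simp [List.getD_eq_getElem?_getD]

lemma ofFn_areaFun {w : List Bool} (hw : IsDyckWord w) (hl : w.length = 2 * n) :
    List.ofFn (areaFun n w) = areaList w 0 := by
  refine ofFn_getD ?_
  have := List.count_true_add_count_false w
  have := hw.2
  rw [areaList_length]
  omega

lemma bijOn_areaFun (n : ℕ) :
    Set.BijOn (areaFun n) {w | IsDyckWord w ∧ w.length = 2 * n} {f | IsAreaSeq f} := by
  refine ⟨fun w ⟨hw, hl⟩ => ?_, fun w ⟨hw, hl⟩ w' ⟨hw', hl'⟩ h => ?_, fun f hf => ?_⟩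
  · show IsAreaSeq _
    rw [isAreaSeq_iff_isAreaList, ofFn_areaFun hw hl]
    exact IsBallot.isAreaList_areaList hw.1
  · have harea : areaList w 0 = areaList w' 0 := by
      rw [← ofFn_areaFun hw hl, ← ofFn_areaFun hw' hl', h]
    rw [← wordOfArea_areaList (h := 0) hw.1 hw.2, harea, wordOfArea_areaList (h := 0) hw'.1 hw'.2]
  · have hl := isAreaSeq_iff_isAreaList.1 hf
    have hfalse := count_false_wordOfArea hl
    have htrue := count_true_wordOfArea 0 (List.ofFn f)
    refine ⟨wordOfArea 0 (List.ofFn f), ⟨⟨hl.isBallot_wordOfArea, ?_⟩, ?_⟩, ?_⟩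
    · rw [hfalse, htrue, Nat.zero_add]
    · rw [← List.count_true_add_count_false, hfalse, htrue]
      simp [two_mul]
    · funext i
      simp [areaFun, areaList_wordOfArea hl, List.getD_eq_getElem?_getD]

end AreaSeq

section UnitInterval

variable {n : ℕ}

def areaRel (f : Fin n → ℕ) (i j : Fin n) : Prop :=
  f i + 2 ≤ f j ∨ (f i + 1 = f j ∧ i < j)

instance (f : Fin n → ℕ) : DecidableRel (areaRel f) :=
  fun _ _ => inferInstanceAs (Decidable (_ ∨ _))

lemma areaRel.lt {f : Fin n → ℕ} {i j : Fin n} (h : areaRel f i j) : f i < f j := by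
  rcases h with h | ⟨h, -⟩ <;> omega

lemma natCast_add_lt_natCast_add_iff {a b : ℕ} {u v : ℝ} (hu0 : 0 ≤ u) (hu1 : u < 1)
    (hv0 : 0 ≤ v) (hv1 : v < 1) : (a : ℝ) + u < b + v ↔ a < b ∨ a = b ∧ u < v := by
  constructor
  · intro h
    rcases lt_trichotomy a b with hab | rfl | hab
    · exact Or.inl hab
    · exact Or.inr ⟨rfl, by linarith⟩
    · have : (b : ℝ) + 1 ≤ a := by exact_mod_cast hab
      linarith
  · rintro (hab | ⟨rfl, huv⟩)
    · have : (a : ℝ) + 1 ≤ b := by exact_mod_cast hab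
      linarith
    · linarith

/-- The integer part of `areaEmbedding f i` is the area `f i`; the fractional part `i / n` breaks
ties by index, as `areaRel` does. -/
noncomputable def areaEmbedding (f : Fin n → ℕ) (i : Fin n) : ℝ := f i + i / n

lemma areaEmbedding_add_lt_iff (f : Fin n → ℕ) (c : ℕ) (i j : Fin n) :
    areaEmbedding f i + c < areaEmbedding f j ↔ f i + c < f j ∨ f i + c = f j ∧ i < j := by
  have hn : (0 : ℝ) < n := by exact_mod_cast i.pos
  have hfrac (k : Fin n) : 0 ≤ (k : ℝ) / n ∧ (k : ℝ) / n < 1 :=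
    ⟨by positivity, (div_lt_one hn).2 (by exact_mod_cast k.isLt)⟩
  rw [areaEmbedding, areaEmbedding, add_right_comm, ← Nat.cast_add,
    natCast_add_lt_natCast_add_iff (hfrac i).1 (hfrac i).2 (hfrac j).1 (hfrac j).2,
    div_lt_div_iff_of_pos_right hn, Nat.cast_lt, Fin.val_fin_lt]

lemma areaRel_iff (f : Fin n → ℕ) (i j : Fin n) :
    areaRel f i j ↔ areaEmbedding f i + 1 < areaEmbedding f j := by
  rw [← Nat.cast_one, areaEmbedding_add_lt_iff, areaRel]
  omega

lemma areaEmbedding_injective (f : Fin n → ℕ) : Function.Injective (areaEmbedding f) := by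
  intro i j h
  have hij := (areaEmbedding_add_lt_iff f 0 i j).not.1 (by simp [h])
  have hji := (areaEmbedding_add_lt_iff f 0 j i).not.1 (by simp [h])
  omega

noncomputable def sortedAreaEmbedding (f : Fin n → ℕ) : Fin n → ℝ :=
  areaEmbedding f ∘ Tuple.sort (areaEmbedding f)

lemma strictMono_sortedAreaEmbedding (f : Fin n → ℕ) : StrictMono (sortedAreaEmbedding f) :=
  (Tuple.monotone_sort _).strictMono_of_injective
    ((areaEmbedding_injective f).comp (Equiv.injective _))

noncomputable def lowerCount (y : Fin n → ℝ) (j : Fin n) : ℕ := #{i | y i + 1 < y j}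

variable {y : Fin n → ℝ}

lemma lt_lowerCount_iff (hy : Monotone y) {i j : Fin n} :
    (i : ℕ) < lowerCount y j ↔ y i + 1 < y j :=
  Tuple.lt_card_lt_iff_apply_lt_of_monotone (f := fun i => y i + 1) fun _ _ h => by
    simpa using hy h

lemma monotone_lowerCount (hy : Monotone y) : Monotone (lowerCount y) :=
  fun _ _ h => card_le_card <| monotone_filter_right _ fun _ _ hi => hi.trans_le (hy h)

lemma lowerCount_le (hy : StrictMono y) (j : Fin n) : lowerCount y j ≤ j :=
  not_lt.1 fun h => by linarith [(lt_lowerCount_iff hy.monotone).1 h]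

def staircaseRel (d : Fin n → ℕ) (i j : Fin n) : Prop := (i : ℕ) < d j

lemma isUnitIntervalRel_staircaseRel (hy : StrictMono y) :
    IsUnitIntervalRel n (staircaseRel (lowerCount y)) :=
  ⟨y, hy, fun _ _ => lt_lowerCount_iff hy.monotone⟩

lemma IsUnitIntervalRel.exists_eq_staircaseRel {r : Fin n → Fin n → Prop}
    (hr : IsUnitIntervalRel n r) :
    ∃ d : Fin n → ℕ, (Monotone d ∧ ∀ j, d j ≤ j) ∧ r = staircaseRel d := by
  obtain ⟨x, hx, hrx⟩ := hr
  refine ⟨lowerCount x, ⟨monotone_lowerCount hx.monotone, lowerCount_le hx⟩, ?_⟩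
  ext i j
  exact (hrx i j).trans (lt_lowerCount_iff hx.monotone).symm

lemma isoRel_areaRel_staircaseRel (f : Fin n → ℕ) :
    IsoRel n (areaRel f) (staircaseRel (lowerCount (sortedAreaEmbedding f))) := by
  refine ⟨(Tuple.sort (areaEmbedding f)).symm, fun i j => ?_⟩
  rw [staircaseRel, lt_lowerCount_iff (strictMono_sortedAreaEmbedding f).monotone, areaRel_iff]
  simp [sortedAreaEmbedding]

end UnitInterval

section Height

inductive ChainTo {α : Type*} (r : α → α → Prop) : ℕ → α → Prop
  | zero (a : α) : ChainTo r 0 a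
  | succ {a b : α} {L : ℕ} : ChainTo r L a → r a b → ChainTo r (L + 1) b

lemma ChainTo.map {α β : Type*} {r : α → α → Prop} {s : β → β → Prop} {g : α → β}
    (hg : ∀ a b, r a b → s (g a) (g b)) {L : ℕ} {a : α} (h : ChainTo r L a) :
    ChainTo s L (g a) := by
  induction h with
  | zero a => exact .zero _
  | succ _ hab ih => exact ih.succ (hg _ _ hab)

variable {n : ℕ} {f g : Fin n → ℕ}

lemma chainTo_areaRel_iff (hf : IsAreaSeq f) {L : ℕ} {m : Fin n} :
    ChainTo (areaRel f) L m ↔ L ≤ f m := by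
  constructor
  · intro h
    induction h with
    | zero => exact Nat.zero_le _
    | succ _ hab ih => exact ih.trans_lt hab.lt
  · induction L generalizing m with
    | zero => exact fun _ => .zero m
    | succ L ih =>
      intro hL
      obtain ⟨k, hkm, hk⟩ := hf.exists_lt_eq (t := f m - 1) (m := m) (by omega)
      exact (ih (m := k) (by omega)).succ (Or.inr ⟨by omega, hkm⟩)

lemma eq_comp_of_areaRel_iff (hf : IsAreaSeq f) (hg : IsAreaSeq g) (σ : Equiv.Perm (Fin n))
    (h : ∀ i j, areaRel f i j ↔ areaRel g (σ i) (σ j)) : f = g ∘ σ := by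
  funext m
  refine eq_of_forall_le_iff fun L => ?_
  rw [Function.comp_apply, ← chainTo_areaRel_iff hf, ← chainTo_areaRel_iff hg]
  refine ⟨ChainTo.map fun a b => (h a b).1, fun hc => ?_⟩
  simpa using hc.map (g := σ.symm) fun a b hab => (h _ _).2 (by simpa using hab)

end Height

section DownDegree

variable {α β : Type*} [Fintype α] [Fintype β]

def downDeg (r : α → α → Prop) [DecidableRel r] (m : α) : ℕ := #{k | r k m}

lemma downDeg_eq_comp {r : α → α → Prop} {s : β → β → Prop} [DecidableRel r] [DecidableRel s]
    (σ : α ≃ β) (h : ∀ i j, r i j ↔ s (σ i) (σ j)) : downDeg r = downDeg s ∘ σ :=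
  funext fun m => card_equiv σ fun k => by simp [h]

end DownDegree

section MapUniv

variable {α β γ : Type*} [Fintype α] [Fintype β]

lemma map_univ_comp_equiv (u : β → γ) (σ : α ≃ β) :
    univ.val.map (u ∘ σ) = univ.val.map u := by
  rw [← Multiset.map_map, Multiset.map_univ_val_equiv]

variable {u v : α → γ}

lemma card_filter_eq_of_map_univ_eq (huv : univ.val.map u = univ.val.map v) (P : γ → Prop)
    [DecidablePred P] : #{k | P (u k)} = #{k | P (v k)} := by
  simp only [card_def, filter_val, ← Multiset.countP_map, huv]

lemma le_of_map_univ_eq [LinearOrder γ] (huv : univ.val.map u = univ.val.map v) {p q : α}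
    (hq : ∀ m, v m ≤ v q) : u p ≤ v q := by
  obtain ⟨m, -, hm⟩ := Multiset.mem_map.1 (huv ▸ Multiset.mem_map_of_mem u (mem_univ p))
  exact hm ▸ hq m

lemma map_univ_eq_cons_removeNth {n : ℕ} (u : Fin (n + 1) → γ) (p : Fin (n + 1)) :
    univ.val.map u = u p ::ₘ univ.val.map (p.removeNth u) := by
  rw [Fin.univ_succAbove n p, cons_val, Multiset.map_cons, map_val, Multiset.map_map]
  rfl

lemma map_univ_removeNth_eq {n : ℕ} {u v : Fin (n + 1) → γ} {p q : Fin (n + 1)}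
    (huv : univ.val.map u = univ.val.map v) (hpq : u p = v q) :
    univ.val.map (p.removeNth u) = univ.val.map (q.removeNth v) := by
  rwa [map_univ_eq_cons_removeNth u p, map_univ_eq_cons_removeNth v q, hpq,
    Multiset.cons_inj_right] at huv

lemma card_filter_univ_succAbove {n : ℕ} (p : Fin (n + 1)) {P : Fin (n + 1) → Prop}
    [DecidablePred P] (hp : ¬ P p) : #{x | P x} = #{x : Fin n | P (p.succAbove x)} := by
  rw [Fin.univ_succAbove n p, filter_cons_of_neg _ _ _ _ hp, filter_map, card_map]
  rfl

end MapUniv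

section LastMax

variable {n : ℕ}

def IsLastMax (f : Fin n → ℕ) (p : Fin n) : Prop := ∀ m, toLex (f m, m) ≤ toLex (f p, p)

lemma exists_isLastMax (f : Fin (n + 1) → ℕ) : ∃ p, IsLastMax f p := by
  obtain ⟨p, -, hp⟩ := univ.exists_max_image (fun m => toLex (f m, m)) univ_nonempty
  exact ⟨p, fun m => hp m (mem_univ m)⟩

variable {f : Fin n → ℕ} {p : Fin n}

lemma IsLastMax.le (hp : IsLastMax f p) (m : Fin n) : f m ≤ f p := by
  have := Prod.Lex.toLex_le_toLex.1 (hp m)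
  omega

lemma IsLastMax.lt_of_lt (hp : IsLastMax f p) {m : Fin n} (hm : p < m) : f m < f p := by
  rcases Prod.Lex.toLex_le_toLex.1 (hp m) with h | ⟨-, h⟩
  · exact h
  · exact absurd hm h.not_gt

lemma areaRel_of_toLex_le {k m : Fin n} (h : areaRel f k m)
    (hmp : toLex (f m, m) ≤ toLex (f p, p)) : areaRel f k p := by
  rcases Prod.Lex.toLex_le_toLex.1 hmp with hmp | ⟨hmp, hmp'⟩ <;> simp only at hmp
  · rcases h with h | ⟨h, -⟩ <;> exact Or.inl (by omega)
  · rcases h with h | ⟨h, hkm⟩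
    · exact Or.inl (by omega)
    · exact Or.inr ⟨by omega, hkm.trans_le hmp'⟩

lemma IsLastMax.downDeg_le (hp : IsLastMax f p) (m : Fin n) :
    downDeg (areaRel f) m ≤ downDeg (areaRel f) p :=
  card_le_card <| monotone_filter_right _ fun _ _ hk => areaRel_of_toLex_le hk (hp m)

lemma downDeg_areaRel (p : Fin n) :
    downDeg (areaRel f) p = #{k | f k + 2 ≤ f p} + #{k | f k + 1 = f p ∧ k < p} := by
  rw [downDeg, ← card_union_of_disjoint, ← filter_or]
  · rfl
  · exact disjoint_filter.2 fun _ _ h h' => by omega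

end LastMax

section Removal

variable {n : ℕ} {f g : Fin (n + 1) → ℕ} {p q : Fin (n + 1)}

lemma IsLastMax.isAreaSeq_removeNth (hf : IsAreaSeq f) (hp : IsLastMax f p) (hp0 : p ≠ 0) :
    IsAreaSeq (p.removeNth f) := by
  refine ⟨fun i hi => ?_, fun i j hij => ?_⟩
  · have hip : i.castSucc < p := by
      rwa [Fin.lt_def, Fin.val_castSucc, hi, Nat.pos_iff_ne_zero, Fin.val_ne_zero_iff]
    rw [Fin.removeNth_apply, Fin.succAbove_of_castSucc_lt _ _ hip]
    exact hf.zero _ hi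
  have hij' : i.castSucc < j.castSucc :=
    Fin.castSucc_lt_castSucc_iff.2 (Fin.lt_def.2 (by omega))
  rw [Fin.removeNth_apply, Fin.removeNth_apply, Fin.succAbove, Fin.succAbove]
  split_ifs with hj hi hi
  · exact hf.step _ _ (by simpa using hij)
  · exact absurd (hij'.trans hj) hi
  · have hlt := hp.lt_of_lt (Fin.le_castSucc_iff.1 (not_lt.1 hj))
    have hstep := hf.step i.castSucc p (by simp [Fin.lt_def] at hi hj ⊢; omega)
    omega
  · exact hf.step _ _ (by simpa using hij)

lemma IsLastMax.downDeg_removeNth (hp : IsLastMax f p) :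
    downDeg (areaRel (p.removeNth f)) = p.removeNth (downDeg (areaRel f)) := by
  ext k
  rw [Fin.removeNth_apply, downDeg, downDeg,
    card_filter_univ_succAbove p fun h => (hp.le _).not_gt h.lt]
  simp only [areaRel, Fin.removeNth, Fin.succAbove_lt_succAbove_iff]
  rfl

lemma card_filter_lt_eq_removeNth (f : Fin (n + 1) → ℕ) (p : Fin (n + 1)) (P : ℕ → Prop)
    [DecidablePred P] :
    #{k | P (f k) ∧ k < p} = #{k : Fin n | P (p.removeNth f k) ∧ k.castSucc < p} := by
  rw [card_filter_univ_succAbove p fun h => lt_irrefl _ h.2]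
  simp only [Fin.removeNth, Fin.succAbove_lt_iff_castSucc_lt]
  rfl

/-- The entry just before `q` is one level below the maximum and lies after `p`. -/
lemma IsLastMax.card_lt_of_lt (hg : IsAreaSeq g) (hp : IsLastMax f p) (hM : f p = g q)
    (hrest : p.removeNth f = q.removeNth g) (hpq : p < q) :
    #{k | f k + 1 = f p ∧ k < p} < #{k | g k + 1 = g q ∧ k < q} := by
  have hq0 : q ≠ 0 := Fin.ne_zero_of_lt hpq
  set j := q.pred hq0
  have hjq : j.castSucc < q := by simpa [j] using Fin.castSucc_lt_succ (i := j)
  have hpj : p ≤ j.castSucc := Fin.le_castSucc_iff.2 (by simpa [j] using hpq)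
  have hfj : p.removeNth f j = f q := by
    rw [Fin.removeNth_apply, Fin.succAbove_of_le_castSucc _ _ hpj, Fin.succ_pred]
  have hj : f q = g j.castSucc := by
    rw [← hfj, hrest, Fin.removeNth_apply, Fin.succAbove_of_castSucc_lt _ _ hjq]
  have hfq := hp.lt_of_lt hpq
  have hstep := hg.step j.castSucc q (by simp [j]; omega)
  rw [card_filter_lt_eq_removeNth f p (· + 1 = f p),
    card_filter_lt_eq_removeNth g q (· + 1 = g q), hM, ← hrest]
  refine card_lt_card ((ssubset_iff_of_subset (monotone_filter_right _
    fun k _ hk => ⟨hk.1, hk.2.trans hpq⟩)).2 ⟨j, ?_, ?_⟩)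
  · simp only [mem_filter, mem_univ, true_and]
    exact ⟨by omega, hjq⟩
  · simp only [mem_filter, mem_univ, true_and, not_and, not_lt]
    exact fun _ => hpj

end Removal

/-- The last maximum `p` has the largest down-degree, so the multisets determine
`#{k < p | f k + 1 = f p}`, which pins down `p` once the rest of the sequence is known. -/
theorem eq_of_map_univ_eq : ∀ {n : ℕ} {f g : Fin n → ℕ}, IsAreaSeq f → IsAreaSeq g →
    univ.val.map f = univ.val.map g →
    univ.val.map (downDeg (areaRel f)) = univ.val.map (downDeg (areaRel g)) → f = g
  | 0, f, g, _, _, _, _ => Subsingleton.elim f g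
  | n + 1, f, g, hf, hg, hfg, hD => by
    obtain ⟨p, hp⟩ := exists_isLastMax f
    obtain ⟨q, hq⟩ := exists_isLastMax g
    have hM : f p = g q :=
      le_antisymm (le_of_map_univ_eq hfg hq.le) (le_of_map_univ_eq hfg.symm hp.le)
    rcases Nat.eq_zero_or_pos (f p) with hM0 | hM1
    · funext m
      have := hp.le m
      have := hq.le m
      omega
    have hDpq : downDeg (areaRel f) p = downDeg (areaRel g) q :=
      le_antisymm (le_of_map_univ_eq hD hq.downDeg_le) (le_of_map_univ_eq hD.symm hp.downDeg_le)
    have hcount : #{k | f k + 1 = f p ∧ k < p} = #{k | g k + 1 = g q ∧ k < q} := by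
      have := card_filter_eq_of_map_univ_eq hfg (· + 2 ≤ f p)
      rw [downDeg_areaRel, downDeg_areaRel] at hDpq
      simp only [hM] at this hDpq ⊢
      omega
    have hrest : p.removeNth f = q.removeNth g := by
      refine eq_of_map_univ_eq
        (hp.isAreaSeq_removeNth hf fun h => hM1.ne' (hf.zero p (by simp [h])))
        (hq.isAreaSeq_removeNth hg fun h => (hM ▸ hM1).ne' (hg.zero q (by simp [h])))
        (map_univ_removeNth_eq hfg hM) ?_
      rw [hp.downDeg_removeNth, hq.downDeg_removeNth]
      exact map_univ_removeNth_eq hD hDpq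
    obtain rfl : p = q := by
      rcases lt_trichotomy p q with h | h | h
      · exact absurd hcount (hp.card_lt_of_lt hg hM hrest h).ne
      · exact h
      · exact absurd hcount (hq.card_lt_of_lt hf hM.symm hrest.symm h).ne'
    rw [← Fin.insertNth_self_removeNth p f, ← Fin.insertNth_self_removeNth p g, hrest, hM]

lemma isoRel_equivalence (n : ℕ) : Equivalence (IsoRel n) where
  refl _ := ⟨Equiv.refl _, fun _ _ => Iff.rfl⟩
  symm := fun ⟨σ, h⟩ => ⟨σ.symm, fun i j => by simpa using (h (σ.symm i) (σ.symm j)).symm⟩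
  trans := fun ⟨σ, h⟩ ⟨τ, h'⟩ => ⟨σ.trans τ, fun i j => (h i j).trans (h' (σ i) (σ j))⟩

section Classes

variable {n : ℕ} {f g : Fin n → ℕ}

lemma eq_of_isoRel_areaRel (hf : IsAreaSeq f) (hg : IsAreaSeq g)
    (h : IsoRel n (areaRel f) (areaRel g)) : f = g := by
  obtain ⟨σ, hσ⟩ := h
  refine eq_of_map_univ_eq hf hg ?_ ?_
  · rw [eq_comp_of_areaRel_iff hf hg σ hσ, map_univ_comp_equiv]
  · rw [downDeg_eq_comp σ hσ, map_univ_comp_equiv]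

lemma finite_monotone_le_val : {d : Fin n → ℕ | Monotone d ∧ ∀ j, d j ≤ j}.Finite :=
  (Set.Finite.pi fun j : Fin n => Set.finite_Iic (j : ℕ)).subset fun _ hd j _ => hd.2 j

lemma surjOn_lowerCount_sortedAreaEmbedding :
    Set.SurjOn (fun f => lowerCount (sortedAreaEmbedding f)) {f : Fin n → ℕ | IsAreaSeq f}
      {d | Monotone d ∧ ∀ j, d j ≤ j} := by
  have hmaps : Set.MapsTo (fun f => lowerCount (sortedAreaEmbedding f))
      {f : Fin n → ℕ | IsAreaSeq f} {d | Monotone d ∧ ∀ j, d j ≤ j} := fun f _ =>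
    ⟨monotone_lowerCount (strictMono_sortedAreaEmbedding f).monotone,
      lowerCount_le (strictMono_sortedAreaEmbedding f)⟩
  have hinj : Set.InjOn (fun f => lowerCount (sortedAreaEmbedding f))
      {f : Fin n → ℕ | IsAreaSeq f} := fun f hf g hg h => by
    have hfg := isoRel_areaRel_staircaseRel f
    dsimp only at h
    rw [h] at hfg
    exact eq_of_isoRel_areaRel hf hg <|
      (isoRel_equivalence n).trans hfg ((isoRel_equivalence n).symm (isoRel_areaRel_staircaseRel g))
  refine (Set.eq_of_subset_of_ncard_le hmaps.image_subset ?_ finite_monotone_le_val).superset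
  rw [hinj.ncard_image, ncard_isAreaSeq]

lemma bijOn_quotMk_areaRel (n : ℕ) :
    Set.BijOn (fun f : Fin n → ℕ => Quot.mk (IsoRel n) (areaRel f)) {f | IsAreaSeq f}
      {c | ∃ r : Fin n → Fin n → Prop, Quot.mk (IsoRel n) r = c ∧ IsUnitIntervalRel n r} := by
  refine ⟨fun f _ => ⟨_, (Quot.sound (isoRel_areaRel_staircaseRel f)).symm,
    isUnitIntervalRel_staircaseRel (strictMono_sortedAreaEmbedding f)⟩,
    fun f hf g hg h => eq_of_isoRel_areaRel hf hg ?_, ?_⟩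
  · exact (isoRel_equivalence n).eqvGen_iff.1 (Quot.eqvGen_exact h)
  rintro _ ⟨r, rfl, hr⟩
  obtain ⟨d, hd, rfl⟩ := IsUnitIntervalRel.exists_eq_staircaseRel hr
  obtain ⟨f, hf, rfl⟩ := surjOn_lowerCount_sortedAreaEmbedding hd
  exact ⟨f, hf, Quot.sound (isoRel_areaRel_staircaseRel f)⟩

end Classes

end DyckUnitInterval

/-- **The map `ψ` is a bijection from Dyck paths of size `n` onto isomorphism
classes of unit interval posets on `n` elements**, where `ψ` sends a Dyck path,
via its area vector `(a_1, …, a_n)`, to the poset with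
`i ≺ j ↔ a_i + 2 ≤ a_j ∨ (a_i + 1 = a_j ∧ i < j)`. -/
theorem psi_bijection (n : ℕ) :
    Set.BijOn (fun w : List Bool => Quot.mk (IsoRel n) (relOfDyck n w))
      {w | IsDyckWord w ∧ w.length = 2 * n}
      {c | ∃ r : Fin n → Fin n → Prop,
        Quot.mk (IsoRel n) r = c ∧ IsUnitIntervalRel n r} :=
  (DyckUnitInterval.bijOn_quotMk_areaRel n).comp (DyckUnitInterval.bijOn_areaFun n)
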